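/- A conditional lower prevision lp on C ⊆ C(X) is coherent if and only if there is a nonempty set ℙ* of conditional linear previsions on C(X) such that lp(f|B) = inf{ P(f|B) : P ∈ ℙ* } for all (f,B) ∈ C; moreover, when lp is coherent, ℙ* can be chosen so that this infimum is attained (a minimum) for every (f,B) ∈ C. -/

import Mathlib

/-!
If `lp` is the lower prevision of a coherent set `D`, every total (maximal) coherent
superset of `D` induces a conditional linear prevision dominating `lp`. For each `(f, B)` one such
superset attains `lp(f|B)`: adjoin to `D` the gambles `λ(m - f)1_B` with `m > lp(f|B)`, which keeps
it coherent, and complete the result by Zorn's lemma. Conversely, the intersection of the coherent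
sets inducing the members of `ℙ*` is coherent and induces their lower envelope.
-/

open scoped BigOperators

namespace IPaper

variable {X : Type*}

/-- A gamble on `X`: a bounded real-valued function. -/
def IsGamble (f : X → ℝ) : Prop := ∃ M : ℝ, ∀ x, |f x| ≤ M

/-- The indicator gamble of an event. -/
noncomputable def ind (B : Set X) : X → ℝ := Set.indicator B 1

/-- The set `G_{>0}(X)` of nonnegative nonzero gambles. -/
def Gpos (X : Type*) : Set (X → ℝ) := {f | IsGamble f ∧ 0 ≤ f ∧ f ≠ 0}

/-- A coherent set of desirable gambles. -/
structure CoherentSDG (D : Set (X → ℝ)) : Prop where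
  subset_gambles : ∀ f ∈ D, IsGamble f
  d1 : ∀ f : X → ℝ, IsGamble f → 0 ≤ f → f ≠ 0 → f ∈ D
  d2 : ∀ f ∈ D, ∀ l : ℝ, 0 < l → l • f ∈ D
  d3 : ∀ f ∈ D, ∀ g ∈ D, f + g ∈ D
  d4 : ∀ f : X → ℝ, f ≤ 0 → f ∉ D

/-- `posi A`: positive linear hull of `A`. -/
def posi (A : Set (X → ℝ)) : Set (X → ℝ) :=
  {g | ∃ (n : ℕ) (l : Fin (n + 1) → ℝ) (h : Fin (n + 1) → X → ℝ),
    (∀ i, 0 < l i) ∧ (∀ i, h i ∈ A) ∧ g = ∑ i, l i • h i}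

/-- `E(A) := posi (A ∪ G_{>0}(X))`. -/
def natExtSet (A : Set (X → ℝ)) : Set (X → ℝ) := posi (A ∪ Gpos X)

/-- `C(X)`: all pairs of a gamble and a nonempty event. -/
def domC (X : Type*) : Set ((X → ℝ) × Set X) := {p | IsGamble p.1 ∧ p.2.Nonempty}

/-- The conditional lower prevision `lp_D` derived from a set of gambles `D`. -/
noncomputable def lpOf (D : Set (X → ℝ)) (f : X → ℝ) (B : Set X) : EReal :=
  sSup (Real.toEReal '' {m : ℝ | (fun x => (f x - m) * ind B x) ∈ D})

/-- Coherence (Williams) of a conditional lower prevision on a domain `C`. -/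
def Coherent (C : Set ((X → ℝ) × Set X)) (lp : (X → ℝ) → Set X → EReal) : Prop :=
  ∃ D : Set (X → ℝ), CoherentSDG D ∧ ∀ p ∈ C, lp p.1 p.2 = lpOf D p.1 p.2

/-- The set `A_lp`. -/
def Alp (C : Set ((X → ℝ) × Set X)) (lp : (X → ℝ) → Set X → EReal) : Set (X → ℝ) :=
  {g | ∃ p ∈ C, ∃ m : ℝ, (m : EReal) < lp p.1 p.2 ∧ g = fun x => (p.1 x - m) * ind p.2 x}

/-- `E(lp) := E(A_lp)`. -/
def ElpSet (C : Set ((X → ℝ) × Set X)) (lp : (X → ℝ) → Set X → EReal) : Set (X → ℝ) :=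
  natExtSet (Alp C lp)

/-- The natural extension of `lp` to all of `C(X)`. -/
noncomputable def natExtLP (C : Set ((X → ℝ) × Set X)) (lp : (X → ℝ) → Set X → EReal)
    (f : X → ℝ) (B : Set X) : EReal :=
  lpOf (ElpSet C lp) f B

/-- Simple `B`-measurable gamble. -/
def SimpleMeas (Bfam : Set (Set X)) (g : X → ℝ) : Prop :=
  ∃ (c0 : ℝ) (n : ℕ) (c : Fin n → ℝ) (Bs : Fin n → Set X),
    0 ≤ c0 ∧ (∀ i, 0 ≤ c i) ∧ (∀ i, Bs i ∈ Bfam) ∧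
    g = fun x => c0 + ∑ i, c i * ind (Bs i) x

/-- `B`-measurable gamble: uniform limit of nonnegative simple `B`-measurable gambles. -/
def BMeas (Bfam : Set (Set X)) (g : X → ℝ) : Prop :=
  ∃ gs : ℕ → X → ℝ, (∀ n, 0 ≤ gs n ∧ SimpleMeas Bfam (gs n)) ∧
    TendstoUniformly gs g Filter.atTop

/-- A conditional linear prevision on `C(X)`: a coherent self-conjugate conditional
lower prevision on the full domain. -/
def CondLinPrev (P : (X → ℝ) → Set X → EReal) : Prop :=
  Coherent (domC X) P ∧ ∀ p ∈ domC X, P p.1 p.2 = -P (-p.1) p.2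

section Product

variable {X1 X2 : Type*}

/-- `A_{1→2}`. -/
def A12 (D2 : Set (X2 → ℝ)) (F1 : Set (Set X1)) : Set (X1 × X2 → ℝ) :=
  {g | ∃ f2 ∈ D2, ∃ B1 ∈ F1 ∪ {Set.univ}, g = fun p => f2 p.2 * ind B1 p.1}

/-- `A_{2→1}`. -/
def A21 (D1 : Set (X1 → ℝ)) (F2 : Set (Set X2)) : Set (X1 × X2 → ℝ) :=
  {g | ∃ f1 ∈ D1, ∃ B2 ∈ F2 ∪ {Set.univ}, g = fun p => f1 p.1 * ind B2 p.2}

/-- `D1 ⊗ D2`, relative to the families of conditioning events `F1`, `F2`. -/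
def indNatExt (D1 : Set (X1 → ℝ)) (D2 : Set (X2 → ℝ))
    (F1 : Set (Set X1)) (F2 : Set (Set X2)) : Set (X1 × X2 → ℝ) :=
  natExtSet (A12 D2 F1 ∪ A21 D1 F2)

/-- `marg_1(D)`. -/
def marg1 (D : Set (X1 × X2 → ℝ)) : Set (X1 → ℝ) :=
  {f | IsGamble f ∧ (fun p : X1 × X2 => f p.1) ∈ D}

/-- `marg_2(D)`. -/
def marg2 (D : Set (X1 × X2 → ℝ)) : Set (X2 → ℝ) :=
  {f | IsGamble f ∧ (fun p : X1 × X2 => f p.2) ∈ D}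

/-- `marg_1(D|B2)`. -/
def marg1c (D : Set (X1 × X2 → ℝ)) (B2 : Set X2) : Set (X1 → ℝ) :=
  {f | IsGamble f ∧ (fun p : X1 × X2 => f p.1 * ind B2 p.2) ∈ D}

/-- `marg_2(D|B1)`. -/
def marg2c (D : Set (X1 × X2 → ℝ)) (B1 : Set X1) : Set (X2 → ℝ) :=
  {f | IsGamble f ∧ (fun p : X1 × X2 => f p.2 * ind B1 p.1) ∈ D}

/-- Epistemic independence of a set of desirable gambles on `X1 × X2`. -/
def EpIndSDG (F1 : Set (Set X1)) (F2 : Set (Set X2)) (D : Set (X1 × X2 → ℝ)) : Prop :=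
  (∀ B2 ∈ F2, marg1c D B2 = marg1 D) ∧ (∀ B1 ∈ F1, marg2c D B1 = marg2 D)

/-- Independent product (of sets of desirable gambles). -/
def IndProductSDG (F1 : Set (Set X1)) (F2 : Set (Set X2))
    (D1 : Set (X1 → ℝ)) (D2 : Set (X2 → ℝ)) (D : Set (X1 × X2 → ℝ)) : Prop :=
  CoherentSDG D ∧ EpIndSDG F1 F2 D ∧ marg1 D = D1 ∧ marg2 D = D2

/-- The independent natural extension `lp1 ⊗ lp2` on `C(X1 × X2)`. -/
noncomputable def lpProd (C1 : Set ((X1 → ℝ) × Set X1)) (lp1 : (X1 → ℝ) → Set X1 → EReal)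
    (C2 : Set ((X2 → ℝ) × Set X2)) (lp2 : (X2 → ℝ) → Set X2 → EReal)
    (F1 : Set (Set X1)) (F2 : Set (Set X2)) :
    (X1 × X2 → ℝ) → Set (X1 × X2) → EReal :=
  lpOf (indNatExt (ElpSet C1 lp1) (ElpSet C2 lp2) F1 F2)

/-- An independent domain `C ⊆ C(X1 × X2)`. -/
def IndepDomain (F1 : Set (Set X1)) (F2 : Set (Set X2))
    (C : Set ((X1 × X2 → ℝ) × Set (X1 × X2))) : Prop :=
  (∀ (f1 : X1 → ℝ) (B1 : Set X1), IsGamble f1 → B1.Nonempty → ∀ B2 ∈ F2,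
    (((fun p : X1 × X2 => f1 p.1), B1 ×ˢ (Set.univ : Set X2)) ∈ C ↔
      ((fun p : X1 × X2 => f1 p.1), B1 ×ˢ B2) ∈ C)) ∧
  (∀ (f2 : X2 → ℝ) (B2 : Set X2), IsGamble f2 → B2.Nonempty → ∀ B1 ∈ F1,
    (((fun p : X1 × X2 => f2 p.2), (Set.univ : Set X1) ×ˢ B2) ∈ C ↔
      ((fun p : X1 × X2 => f2 p.2), B1 ×ˢ B2) ∈ C))

/-- Epistemic independence of a conditional lower prevision on a domain `C`. -/
def EpIndLP (F1 : Set (Set X1)) (F2 : Set (Set X2))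
    (C : Set ((X1 × X2 → ℝ) × Set (X1 × X2)))
    (lp : (X1 × X2 → ℝ) → Set (X1 × X2) → EReal) : Prop :=
  (∀ (f1 : X1 → ℝ) (B1 : Set X1), IsGamble f1 → B1.Nonempty →
    ((fun p : X1 × X2 => f1 p.1), B1 ×ˢ (Set.univ : Set X2)) ∈ C → ∀ B2 ∈ F2,
    lp (fun p : X1 × X2 => f1 p.1) (B1 ×ˢ (Set.univ : Set X2)) =
      lp (fun p : X1 × X2 => f1 p.1) (B1 ×ˢ B2)) ∧
  (∀ (f2 : X2 → ℝ) (B2 : Set X2), IsGamble f2 → B2.Nonempty →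
    ((fun p : X1 × X2 => f2 p.2), (Set.univ : Set X1) ×ˢ B2) ∈ C → ∀ B1 ∈ F1,
    lp (fun p : X1 × X2 => f2 p.2) ((Set.univ : Set X1) ×ˢ B2) =
      lp (fun p : X1 × X2 => f2 p.2) (B1 ×ˢ B2))

/-- Independent product of two conditional lower previsions, on the joint domain `C`. -/
def IndProductLP (F1 : Set (Set X1)) (F2 : Set (Set X2))
    (C1 : Set ((X1 → ℝ) × Set X1)) (lp1 : (X1 → ℝ) → Set X1 → EReal)
    (C2 : Set ((X2 → ℝ) × Set X2)) (lp2 : (X2 → ℝ) → Set X2 → EReal)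
    (C : Set ((X1 × X2 → ℝ) × Set (X1 × X2)))
    (lp : (X1 × X2 → ℝ) → Set (X1 × X2) → EReal) : Prop :=
  Coherent C lp ∧ EpIndLP F1 F2 C lp ∧
  (∀ p ∈ C1, lp (fun q : X1 × X2 => p.1 q.1) (p.2 ×ˢ (Set.univ : Set X2)) = lp1 p.1 p.2) ∧
  (∀ p ∈ C2, lp (fun q : X1 × X2 => p.1 q.2) ((Set.univ : Set X1) ×ˢ p.2) = lp2 p.1 p.2)

end Product


@[simp]
lemma ind_of_mem {B : Set X} {x : X} (h : x ∈ B) : ind B x = 1 := by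
  simp [ind, h]

@[simp]
lemma ind_of_notMem {B : Set X} {x : X} (h : x ∉ B) : ind B x = 0 := by
  simp [ind, h]

lemma ind_nonneg (B : Set X) (x : X) : 0 ≤ ind B x := by
  by_cases h : x ∈ B <;> simp [h]

lemma isGamble_ind (B : Set X) : IsGamble (ind B) :=
  ⟨1, fun x => by by_cases h : x ∈ B <;> simp [h]⟩

lemma IsGamble.add {f g : X → ℝ} (hf : IsGamble f) (hg : IsGamble g) : IsGamble (f + g) := by
  obtain ⟨M, hM⟩ := hf
  obtain ⟨N, hN⟩ := hg
  exact ⟨M + N, fun x => (abs_add_le _ _).trans (add_le_add (hM x) (hN x))⟩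

lemma IsGamble.smul {f : X → ℝ} (hf : IsGamble f) (l : ℝ) : IsGamble (l • f) := by
  obtain ⟨M, hM⟩ := hf
  exact ⟨|l| * M, fun x => by
    simpa only [Pi.smul_apply, smul_eq_mul, abs_mul] using
      mul_le_mul_of_nonneg_left (hM x) (abs_nonneg l)⟩

lemma IsGamble.neg {f : X → ℝ} (hf : IsGamble f) : IsGamble (-f) := by
  simpa using hf.smul (-1)

lemma IsGamble.sub {f g : X → ℝ} (hf : IsGamble f) (hg : IsGamble g) : IsGamble (f - g) := by
  simpa only [sub_eq_add_neg] using hf.add hg.neg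

noncomputable def cut (f : X → ℝ) (m : ℝ) (B : Set X) : X → ℝ := fun x => (f x - m) * ind B x

lemma cut_eq_add (f : X → ℝ) (m m' : ℝ) (B : Set X) :
    cut f m' B = cut f m B + (m - m') • ind B := by
  funext x
  simp only [cut, Pi.add_apply, Pi.smul_apply, smul_eq_mul]
  ring

lemma cut_neg (f : X → ℝ) (m : ℝ) (B : Set X) : cut (-f) m B = -cut f (-m) B := by
  funext x
  simp only [cut, Pi.neg_apply]
  ring

lemma IsGamble.cut {f : X → ℝ} (hf : IsGamble f) (m : ℝ) (B : Set X) :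
    IsGamble (cut f m B) := by
  obtain ⟨M, hM⟩ := hf
  refine ⟨M + |m|, fun x => ?_⟩
  have hind : |ind B x| ≤ 1 := by by_cases h : x ∈ B <;> simp [h]
  calc |(f x - m) * ind B x| = |f x - m| * |ind B x| := abs_mul _ _
    _ ≤ |f x - m| := mul_le_of_le_one_right (abs_nonneg _) hind
    _ ≤ |f x| + |m| := abs_sub _ _
    _ ≤ M + |m| := by gcongr; exact hM x

namespace CoherentSDG

variable {D : Set (X → ℝ)}

lemma mem_of_le (hD : CoherentSDG D) {d h : X → ℝ} (hd : d ∈ D) (hh : IsGamble h)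
    (hdh : d ≤ h) : h ∈ D := by
  have hsplit : h = d + (h - d) := by abel
  by_cases h0 : h - d = 0
  · rwa [hsplit, h0, add_zero]
  · rw [hsplit]
    exact hD.d3 d hd _ (hD.d1 _ (hh.sub (hD.subset_gambles d hd)) (sub_nonneg.2 hdh) h0)

lemma neg_notMem (hD : CoherentSDG D) {g : X → ℝ} (hg : g ∈ D) : -g ∉ D := fun hng =>
  hD.d4 _ (by simp) (hD.d3 g hg (-g) hng)

lemma neg_mem_of_add_nonpos (hD : CoherentSDG D) {d g : X → ℝ} (hd : d ∈ D) (hg : IsGamble g)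
    (hdg : d + g ≤ 0) : -g ∈ D :=
  hD.mem_of_le hd hg.neg fun x => le_neg_iff_add_nonpos_right.2 (hdg x)

lemma of_smul_mem (hD : CoherentSDG D) {g : X → ℝ} {l : ℝ} (hl : 0 < l) (hlg : l • g ∈ D) :
    g ∈ D := by
  simpa [smul_smul, hl.ne'] using hD.d2 _ hlg l⁻¹ (inv_pos.2 hl)

lemma smul_ind_mem (hD : CoherentSDG D) {B : Set X} (hB : B.Nonempty) {c : ℝ} (hc : 0 < c) :
    c • ind B ∈ D := by
  obtain ⟨b, hb⟩ := hB
  refine hD.d1 _ ((isGamble_ind B).smul c) (fun x => mul_nonneg hc.le (ind_nonneg B x)) ?_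
  intro h0
  simpa [hb, hc.ne'] using congrFun h0 b

lemma cut_mem_of_le (hD : CoherentSDG D) {f : X → ℝ} {B : Set X} {m m' : ℝ} (hm' : m' ≤ m)
    (hm : cut f m B ∈ D) : cut f m' B ∈ D := by
  rw [cut_eq_add f m m' B]
  exact hD.mem_of_le hm ((hD.subset_gambles _ hm).add ((isGamble_ind B).smul _))
    (le_add_of_nonneg_right fun x => mul_nonneg (sub_nonneg.2 hm') (ind_nonneg B x))

lemma iInter {ι : Type*} [Nonempty ι] {E : ι → Set (X → ℝ)} (hE : ∀ i, CoherentSDG (E i)) :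
    CoherentSDG (⋂ i, E i) := by
  obtain ⟨i₀⟩ := ‹Nonempty ι›
  refine ⟨fun f hf => (hE i₀).subset_gambles f (Set.mem_iInter.1 hf i₀), ?_, ?_, ?_, ?_⟩
  · exact fun f hf h0 hne => Set.mem_iInter.2 fun i => (hE i).d1 f hf h0 hne
  · exact fun f hf l hl => Set.mem_iInter.2 fun i => (hE i).d2 f (Set.mem_iInter.1 hf i) l hl
  · exact fun f hf g hg => Set.mem_iInter.2 fun i =>
      (hE i).d3 f (Set.mem_iInter.1 hf i) g (Set.mem_iInter.1 hg i)
  · exact fun f hf hfD => (hE i₀).d4 f hf (Set.mem_iInter.1 hfD i₀)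

lemma sUnion {c : Set (Set (X → ℝ))} (hc : ∀ E ∈ c, CoherentSDG E)
    (hchain : IsChain (· ⊆ ·) c) (hne : c.Nonempty) : CoherentSDG (⋃₀ c) := by
  obtain ⟨E₀, hE₀⟩ := hne
  refine ⟨?_, fun f hf h0 hne => ⟨E₀, hE₀, (hc E₀ hE₀).d1 f hf h0 hne⟩, ?_, ?_, ?_⟩
  · rintro f ⟨E, hE, hf⟩
    exact (hc E hE).subset_gambles f hf
  · rintro f ⟨E, hE, hf⟩ l hl
    exact ⟨E, hE, (hc E hE).d2 f hf l hl⟩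
  · rintro f ⟨E, hE, hf⟩ g ⟨F, hF, hg⟩
    rcases hchain.total hE hF with h | h
    · exact ⟨F, hF, (hc F hF).d3 f (h hf) g hg⟩
    · exact ⟨E, hE, (hc E hE).d3 f hf g (h hg)⟩
  · rintro f hf ⟨E, hE, hfE⟩
    exact (hc E hE).d4 f hf hfE

open scoped Pointwise in
/-- The extension is `D ∪ (insert 0 D + Q)`. -/
lemma exists_superset_union_cone (hD : CoherentSDG D) {Q : Set (X → ℝ)}
    (hQ : ∀ q ∈ Q, IsGamble q) (hQadd : ∀ q ∈ Q, ∀ q' ∈ Q, q + q' ∈ Q)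
    (hQsmul : ∀ q ∈ Q, ∀ l : ℝ, 0 < l → l • q ∈ Q)
    (hQpos : ∀ q ∈ Q, ¬ q ≤ 0) (hQneg : ∀ q ∈ Q, -q ∉ D) :
    ∃ D' : Set (X → ℝ), CoherentSDG D' ∧ D ⊆ D' ∧ Q ⊆ D' := by
  have hD₀add : ∀ d ∈ insert 0 D, ∀ e ∈ insert 0 D, d + e ∈ insert 0 D := by
    rintro d (rfl | hd) e (rfl | he)
    exacts [Or.inl (add_zero 0), Or.inr (by simpa using he), Or.inr (by simpa using hd),
      Or.inr (hD.d3 d hd e he)]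
  have hD₀gamble : ∀ d ∈ insert 0 D, IsGamble d := by
    rintro d (rfl | hd)
    exacts [⟨0, fun _ => by simp⟩, hD.subset_gambles d hd]
  refine ⟨D ∪ (insert 0 D + Q), ⟨?_, ?_, ?_, ?_, ?_⟩, Set.subset_union_left,
    fun q hq => Or.inr ⟨0, Set.mem_insert 0 D, q, hq, zero_add q⟩⟩
  · rintro f (hf | ⟨d, hd, q, hq, rfl⟩)
    exacts [hD.subset_gambles f hf, (hD₀gamble d hd).add (hQ q hq)]
  · exact fun f hf h0 hne => Or.inl (hD.d1 f hf h0 hne)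
  · rintro f (hf | ⟨d, hd, q, hq, rfl⟩) l hl
    · exact Or.inl (hD.d2 f hf l hl)
    · refine Or.inr ⟨l • d, ?_, l • q, hQsmul q hq l hl, (smul_add l d q).symm⟩
      rcases hd with rfl | hd
      exacts [Or.inl (smul_zero l), Or.inr (hD.d2 d hd l hl)]
  · rintro f (hf | ⟨d, hd, q, hq, rfl⟩) g (hg | ⟨e, he, r, hr, rfl⟩)
    · exact Or.inl (hD.d3 f hf g hg)
    · exact Or.inr ⟨f + e, hD₀add f (Or.inr hf) e he, r, hr, by ac_rfl⟩
    · exact Or.inr ⟨d + g, hD₀add d hd g (Or.inr hg), q, hq, by ac_rfl⟩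
    · exact Or.inr ⟨d + e, hD₀add d hd e he, q + r, hQadd q hq r hr, by ac_rfl⟩
  · rintro f hf (hfD | ⟨d, hd, q, hq, rfl⟩)
    · exact hD.d4 f hf hfD
    · rcases hd with rfl | hd
      · exact hQpos q hq (by simpa using hf)
      · exact hQneg q hq (hD.neg_mem_of_add_nonpos hd (hQ q hq) hf)

lemma exists_superset_mem (hD : CoherentSDG D) {g : X → ℝ} (hg : IsGamble g) (hg0 : g ≠ 0)
    (hng : -g ∉ D) : ∃ D' : Set (X → ℝ), CoherentSDG D' ∧ D ⊆ D' ∧ g ∈ D' := by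
  obtain ⟨D', hD', hDD', hQD'⟩ :=
    hD.exists_superset_union_cone (Q := {q | ∃ l : ℝ, 0 < l ∧ q = l • g})
      (by rintro q ⟨l, -, rfl⟩; exact hg.smul l)
      (by rintro q ⟨l, hl, rfl⟩ q' ⟨l', hl', rfl⟩
          exact ⟨l + l', by positivity, (add_smul l l' g).symm⟩)
      (by rintro q ⟨l, hl, rfl⟩ l' hl'; exact ⟨l' * l, by positivity, smul_smul l' l g⟩)
      (by
        rintro q ⟨l, hl, rfl⟩ hle
        refine hng (hD.d1 _ hg.neg (fun x => ?_) (neg_ne_zero.2 hg0))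
        have := hle x
        simp only [Pi.smul_apply, smul_eq_mul, Pi.zero_apply] at this
        simpa using nonpos_of_mul_nonpos_right this hl)
      (by
        rintro q ⟨l, hl, rfl⟩ hlg
        exact hng (hD.of_smul_mem hl (by rwa [smul_neg])))
  exact ⟨D', hD', hDD', hQD' ⟨1, one_pos, (one_smul ℝ g).symm⟩⟩

end CoherentSDG

/-- For coherent sets this is maximality under inclusion. -/
def IsTotalSDG (D : Set (X → ℝ)) : Prop := ∀ g : X → ℝ, IsGamble g → g ≠ 0 → g ∈ D ∨ -g ∈ D

lemma CoherentSDG.exists_total_superset {D : Set (X → ℝ)} (hD : CoherentSDG D) :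
    ∃ D' : Set (X → ℝ), D ⊆ D' ∧ CoherentSDG D' ∧ IsTotalSDG D' := by
  obtain ⟨M, hDM, hM⟩ := zorn_subset_nonempty {E | CoherentSDG E ∧ D ⊆ E}
    (fun c hc hchain hne => ⟨⋃₀ c,
      ⟨CoherentSDG.sUnion (fun E hE => (hc hE).1) hchain hne,
        (hc hne.some_mem).2.trans (Set.subset_sUnion_of_mem hne.some_mem)⟩,
      fun _ => Set.subset_sUnion_of_mem⟩)
    D ⟨hD, subset_rfl⟩
  refine ⟨M, hDM, hM.prop.1, fun g hg hg0 => or_iff_not_imp_right.2 fun hng => ?_⟩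
  obtain ⟨D', hD', hMD', hgD'⟩ := hM.prop.1.exists_superset_mem hg hg0 hng
  exact hM.2 ⟨hD', hM.prop.2.trans hMD'⟩ hMD' hgD'

section lpOf

variable {D : Set (X → ℝ)} {f : X → ℝ} {B : Set X}

lemma coe_le_lpOf {m : ℝ} (hm : cut f m B ∈ D) : (m : EReal) ≤ lpOf D f B :=
  le_sSup ⟨m, hm, rfl⟩

lemma lpOf_le {c : EReal} (h : ∀ m : ℝ, cut f m B ∈ D → (m : EReal) ≤ c) : lpOf D f B ≤ c :=
  sSup_le <| by rintro _ ⟨m, hm, rfl⟩; exact h m hm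

lemma CoherentSDG.cut_mem_of_coe_lt_lpOf (hD : CoherentSDG D) {m : ℝ}
    (hm : (m : EReal) < lpOf D f B) : cut f m B ∈ D := by
  obtain ⟨_, ⟨m', hm', rfl⟩, hlt⟩ := lt_sSup_iff.1 hm
  exact hD.cut_mem_of_le (EReal.coe_lt_coe_iff.1 hlt).le hm'

lemma lpOf_mono {D' : Set (X → ℝ)} (h : D ⊆ D') : lpOf D f B ≤ lpOf D' f B :=
  lpOf_le fun _ hm => coe_le_lpOf (h hm)

lemma lpOf_iInter {ι : Type*} {E : ι → Set (X → ℝ)} (hE : ∀ i, CoherentSDG (E i)) :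
    lpOf (⋂ i, E i) f B = ⨅ i, lpOf (E i) f B := by
  refine le_antisymm (le_iInf fun i => lpOf_mono (Set.iInter_subset E i)) ?_
  refine EReal.ge_of_forall_gt_iff_ge.1 fun m hm => coe_le_lpOf (Set.mem_iInter.2 fun i => ?_)
  exact (hE i).cut_mem_of_coe_lt_lpOf (hm.trans_le (iInf_le _ i))

lemma lpOf_neg_le_neg_lpOf (hD : CoherentSDG D) : lpOf D (-f) B ≤ -lpOf D f B := by
  refine lpOf_le fun m' hm' => EReal.le_neg_of_le_neg (lpOf_le fun m hm => ?_)
  rw [← EReal.coe_neg, EReal.coe_le_coe_iff]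
  by_contra! hlt
  refine hD.d4 _ (fun x => ?_) (hD.d3 _ hm _ hm')
  have hsum : cut f m B x + cut (-f) m' B x = -(m + m') * ind B x := by
    simp only [cut, Pi.neg_apply]
    ring
  show cut f m B x + cut (-f) m' B x ≤ 0
  rw [hsum]
  exact mul_nonpos_of_nonpos_of_nonneg (by linarith) (ind_nonneg B x)

/-- Totality leaves no gap between acceptable buying prices of `f` and selling prices
(negated buying prices of `-f`). -/
lemma cut_mem_or_cut_neg_mem (hD : CoherentSDG D) (hT : IsTotalSDG D) (hf : IsGamble f)
    (hB : B.Nonempty) {m m' : ℝ} (hmm' : m < m') : cut f m B ∈ D ∨ cut (-f) (-m') B ∈ D := by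
  by_cases h0 : cut f m' B = 0
  · left
    rw [cut_eq_add f m' m B, h0, zero_add]
    exact hD.smul_ind_mem hB (sub_pos.2 hmm')
  rcases hT _ (hf.cut m' B) h0 with h | h
  · exact Or.inl (hD.cut_mem_of_le hmm'.le h)
  · rw [cut_neg, neg_neg]
    exact Or.inr h

lemma lpOf_eq_neg_lpOf_neg (hD : CoherentSDG D) (hT : IsTotalSDG D) (hf : IsGamble f)
    (hB : B.Nonempty) : lpOf D f B = -lpOf D (-f) B := by
  refine le_antisymm (EReal.le_neg_of_le_neg (lpOf_neg_le_neg_lpOf hD)) ?_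
  by_contra! hlt
  obtain ⟨m, hm, hmm'⟩ := EReal.exists_between_coe_real hlt
  obtain ⟨m', hm', hm'lt⟩ := EReal.exists_between_coe_real hmm'
  rcases cut_mem_or_cut_neg_mem hD hT hf hB (EReal.coe_lt_coe_iff.1 hm') with h | h
  · exact (coe_le_lpOf h).not_gt hm
  · have := EReal.neg_le_neg_iff.2 (coe_le_lpOf h)
    rw [EReal.coe_neg, neg_neg] at this
    exact this.not_gt hm'lt

lemma CoherentSDG.exists_superset_neg_cut_mem (hD : CoherentSDG D) (hf : IsGamble f)
    (hB : B.Nonempty) :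
    ∃ D' : Set (X → ℝ), CoherentSDG D' ∧ D ⊆ D' ∧
      ∀ m : ℝ, lpOf D f B < m → -cut f m B ∈ D' := by
  set Q : Set (X → ℝ) := {q | ∃ l : ℝ, 0 < l ∧ ∃ m : ℝ, lpOf D f B < m ∧ q = -(l • cut f m B)}
  have hQadd : ∀ q ∈ Q, ∀ q' ∈ Q, q + q' ∈ Q := by
    rintro q ⟨l, hl, m, hm, rfl⟩ q' ⟨l', hl', m', hm', rfl⟩
    refine ⟨l + l', by positivity, (l * m + l' * m') / (l + l'), ?_, ?_⟩
    · refine lt_of_lt_of_le (lt_min hm hm') (EReal.coe_le_coe_iff.2 ?_)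
      rw [le_div_iff₀ (by positivity)]
      nlinarith [min_le_left m m', min_le_right m m']
    · funext x
      simp only [cut, Pi.add_apply, Pi.neg_apply, Pi.smul_apply, smul_eq_mul]
      field_simp
      ring
  have hQpos : ∀ q ∈ Q, ¬ q ≤ 0 := by
    rintro q ⟨l, hl, m, hm, rfl⟩ hle
    obtain ⟨m'', hm'', hm''m⟩ := EReal.exists_between_coe_real hm
    have hcut : 0 ≤ cut f m B := fun x => by
      have := hle x
      simp only [Pi.neg_apply, Pi.smul_apply, smul_eq_mul, Pi.zero_apply, neg_nonpos] at this
      exact nonneg_of_mul_nonneg_right this hl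
    have hmem : cut f m'' B ∈ D := by
      refine hD.mem_of_le (hD.smul_ind_mem hB (sub_pos.2 (EReal.coe_lt_coe_iff.1 hm''m)))
        (hf.cut m'' B) ?_
      rw [cut_eq_add f m m'' B]
      exact le_add_of_nonneg_left hcut
    exact (coe_le_lpOf hmem).not_gt hm''
  have hQneg : ∀ q ∈ Q, -q ∉ D := by
    rintro q ⟨l, hl, m, hm, rfl⟩ hq
    exact (coe_le_lpOf (hD.of_smul_mem hl (by rwa [neg_neg] at hq))).not_gt hm
  obtain ⟨D', hD', hDD', hQD'⟩ := hD.exists_superset_union_cone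
    (by rintro q ⟨l, -, m, -, rfl⟩; exact ((hf.cut m B).smul l).neg) hQadd
    (by
      rintro q ⟨l, hl, m, hm, rfl⟩ l' hl'
      exact ⟨l' * l, by positivity, m, hm, by rw [smul_neg, smul_smul]⟩)
    hQpos hQneg
  exact ⟨D', hD', hDD', fun m hm => hQD' ⟨1, one_pos, m, hm, by rw [one_smul]⟩⟩

lemma CoherentSDG.exists_total_superset_lpOf_eq (hD : CoherentSDG D) (hf : IsGamble f)
    (hB : B.Nonempty) :
    ∃ D' : Set (X → ℝ), D ⊆ D' ∧ CoherentSDG D' ∧ IsTotalSDG D' ∧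
      lpOf D' f B = lpOf D f B := by
  obtain ⟨D₁, hD₁, hDD₁, hcut⟩ := hD.exists_superset_neg_cut_mem hf hB
  obtain ⟨D', hD₁D', hD', hT⟩ := hD₁.exists_total_superset
  refine ⟨D', hDD₁.trans hD₁D', hD', hT, le_antisymm (lpOf_le fun m hm => ?_)
    (lpOf_mono (hDD₁.trans hD₁D'))⟩
  by_contra! hm'
  exact hD'.neg_notMem hm (hD₁D' (hcut m hm'))

end lpOf

lemma condLinPrev_lpOf {D : Set (X → ℝ)} (hD : CoherentSDG D) (hT : IsTotalSDG D) :
    CondLinPrev (lpOf D) :=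
  ⟨⟨D, hD, fun _ _ => rfl⟩, fun _ hp => lpOf_eq_neg_lpOf_neg hD hT hp.1 hp.2⟩

lemma Coherent.mono {C C' : Set ((X → ℝ) × Set X)} {lp : (X → ℝ) → Set X → EReal}
    (h : Coherent C' lp) (hCC' : C ⊆ C') : Coherent C lp :=
  let ⟨D, hD, hlp⟩ := h
  ⟨D, hD, fun p hp => hlp p (hCC' hp)⟩

lemma Coherent.congr {C : Set ((X → ℝ) × Set X)} {lp lp' : (X → ℝ) → Set X → EReal}
    (h : Coherent C lp) (hlp : ∀ p ∈ C, lp p.1 p.2 = lp' p.1 p.2) : Coherent C lp' :=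
  let ⟨D, hD, hlpD⟩ := h
  ⟨D, hD, fun p hp => (hlp p hp).symm.trans (hlpD p hp)⟩

lemma Coherent.sInf {C : Set ((X → ℝ) × Set X)} {PP : Set ((X → ℝ) → Set X → EReal)}
    (hne : PP.Nonempty) (hPP : ∀ P ∈ PP, Coherent C P) :
    Coherent C fun f B => sInf ((fun P : (X → ℝ) → Set X → EReal => P f B) '' PP) := by
  choose! E hE hPE using hPP
  have : Nonempty PP := hne.to_subtype
  refine ⟨⋂ P : PP, E P, CoherentSDG.iInter fun P : PP => hE P P.2, fun p hp => ?_⟩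
  rw [lpOf_iInter fun P : PP => hE P P.2]
  exact sInf_image'.trans (iInf_congr fun P => hPE P P.2 p hp)

lemma Coherent.exists_isLeast_condLinPrev {C : Set ((X → ℝ) × Set X)} (hC : C ⊆ domC X)
    {lp : (X → ℝ) → Set X → EReal} (h : Coherent C lp) :
    ∃ PP : Set ((X → ℝ) → Set X → EReal), PP.Nonempty ∧ (∀ P ∈ PP, CondLinPrev P) ∧
      ∀ p ∈ C, IsLeast ((fun P : (X → ℝ) → Set X → EReal => P p.1 p.2) '' PP) (lp p.1 p.2) := by
  obtain ⟨D, hD, hlp⟩ := h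
  refine ⟨{P | ∃ D', D ⊆ D' ∧ CoherentSDG D' ∧ IsTotalSDG D' ∧ P = lpOf D'}, ?_, ?_, ?_⟩
  · obtain ⟨D', hDD', hD', hT⟩ := hD.exists_total_superset
    exact ⟨_, D', hDD', hD', hT, rfl⟩
  · rintro _ ⟨D', -, hD', hT, rfl⟩
    exact condLinPrev_lpOf hD' hT
  · intro p hp
    obtain ⟨D', hDD', hD', hT, hattain⟩ := hD.exists_total_superset_lpOf_eq (hC hp).1 (hC hp).2
    refine ⟨⟨lpOf D', ⟨D', hDD', hD', hT, rfl⟩, hattain.trans (hlp p hp).symm⟩, ?_⟩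
    rintro _ ⟨_, ⟨D'', hDD'', -, -, rfl⟩, rfl⟩
    exact (hlp p hp).trans_le (lpOf_mono hDD'')

theorem stmt17_general {X : Type*} (C : Set ((X → ℝ) × Set X)) (hC : C ⊆ domC X)
    (lp : (X → ℝ) → Set X → EReal) :
    (Coherent C lp ↔
      ∃ PP : Set ((X → ℝ) → Set X → EReal), PP.Nonempty ∧
        (∀ P ∈ PP, CondLinPrev P) ∧
        ∀ p ∈ C, lp p.1 p.2 = sInf ((fun P : (X → ℝ) → Set X → EReal => P p.1 p.2) '' PP)) ∧
    (Coherent C lp →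
      ∃ PP : Set ((X → ℝ) → Set X → EReal), PP.Nonempty ∧
        (∀ P ∈ PP, CondLinPrev P) ∧
        (∀ p ∈ C, lp p.1 p.2 = sInf ((fun P : (X → ℝ) → Set X → EReal => P p.1 p.2) '' PP)) ∧
        ∀ p ∈ C, ∃ P ∈ PP, P p.1 p.2 = lp p.1 p.2) := by
  refine ⟨⟨fun h => ?_, fun ⟨PP, hne, hlin, henv⟩ => ?_⟩, fun h => ?_⟩
  · obtain ⟨PP, hne, hlin, hleast⟩ := h.exists_isLeast_condLinPrev hC
    exact ⟨PP, hne, hlin, fun p hp => (hleast p hp).csInf_eq.symm⟩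
  · exact (Coherent.sInf hne fun P hP => (hlin P hP).1.mono hC).congr fun p hp => (henv p hp).symm
  · obtain ⟨PP, hne, hlin, hleast⟩ := h.exists_isLeast_condLinPrev hC
    exact ⟨PP, hne, hlin, fun p hp => (hleast p hp).csInf_eq.symm, fun p hp => (hleast p hp).1⟩

/-- Proposition 17, lower envelope theorem: coherence is equivalent to
being a lower envelope of conditional linear previsions; for coherent `lp` the
envelope can be chosen so that the infimum is attained. -/
theorem stmt17 {X : Type*} [Nonempty X] (C : Set ((X → ℝ) × Set X)) (hC : C ⊆ domC X)
    (lp : (X → ℝ) → Set X → EReal) :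
    (Coherent C lp ↔
      ∃ PP : Set ((X → ℝ) → Set X → EReal), PP.Nonempty ∧
        (∀ P ∈ PP, CondLinPrev P) ∧
        ∀ p ∈ C, lp p.1 p.2 = sInf ((fun P : (X → ℝ) → Set X → EReal => P p.1 p.2) '' PP)) ∧
    (Coherent C lp →
      ∃ PP : Set ((X → ℝ) → Set X → EReal), PP.Nonempty ∧
        (∀ P ∈ PP, CondLinPrev P) ∧
        (∀ p ∈ C, lp p.1 p.2 = sInf ((fun P : (X → ℝ) → Set X → EReal => P p.1 p.2) '' PP)) ∧
        ∀ p ∈ C, ∃ P ∈ PP, P p.1 p.2 = lp p.1 p.2) :=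
  stmt17_general C hC lp

end IPaper
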